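/- For every integer i ≥ 1 and every real number t ≥ 0, writing s = ⌊t⌋, one has (s²(s+1) + 2(i² − s²)·t)/(2i(i+1)) ≥ τ_i(t), where τ_i(t) = (−t³ + t² + (2i² − 1)·t)/(2i(i+1)). -/
import Mathlib

open Real

/-- For an integer `i ≥ 1` and real `t`, `τ_i(t) = (−t³ + t² + (2i² − 1)t)/(2i(i+1))`. -/
noncomputable def tauFun (i : ℕ) (t : ℝ) : ℝ :=
  (-t ^ 3 + t ^ 2 + (2 * (i : ℝ) ^ 2 - 1) * t) / (2 * (i : ℝ) * ((i : ℝ) + 1))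

/-- The one-step recurrence expression, with `s = ⌊t⌋`, is bounded below by `τ_i(t)`. -/
theorem recurrence_ge_tauFun (i : ℕ) (hi : 1 ≤ i) (t : ℝ) (ht : 0 ≤ t) :
    ((⌊t⌋ : ℝ) ^ 2 * ((⌊t⌋ : ℝ) + 1) + 2 * ((i : ℝ) ^ 2 - (⌊t⌋ : ℝ) ^ 2) * t) /
        (2 * (i : ℝ) * ((i : ℝ) + 1)) ≥ tauFun i t := by
  have hi' : (1 : ℝ) ≤ (i : ℝ) := by exact_mod_cast hi
  have hd : (0 : ℝ) < 2 * (i : ℝ) * ((i : ℝ) + 1) := by nlinarith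
  have hs0 : (0 : ℝ) ≤ (⌊t⌋ : ℝ) := by exact_mod_cast Int.floor_nonneg.mpr ht
  have h1 : (⌊t⌋ : ℝ) ≤ t := Int.floor_le t
  have h2 : t < (⌊t⌋ : ℝ) + 1 := Int.lt_floor_add_one t
  unfold tauFun
  rw [ge_iff_le, div_le_div_iff_of_pos_right hd]
  have hx : 0 ≤ t - (⌊t⌋:ℝ) := sub_nonneg.mpr h1
  nlinarith [mul_nonneg hx (sq_nonneg (t - (⌊t⌋:ℝ) - 1)), sq_nonneg (t - (⌊t⌋:ℝ)),
    mul_nonneg hs0 (by nlinarith [sq_nonneg (t - (⌊t⌋:ℝ) - 1), sq_nonneg (t - (⌊t⌋:ℝ))] :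
      (0:ℝ) ≤ 3*(t - (⌊t⌋:ℝ))^2 - 2*(t - (⌊t⌋:ℝ)) + 1),
    mul_nonneg (mul_nonneg hs0 hs0) hx]
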